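/- (Corollary 2, upper bound: MIM-weighted coding theorem for i.i.d. sequence sources.) Let D ≥ 2 be an integer, let p : Fin N → ℝ with p i > 0 and ∑ i, p i = 1, let ω ∈ ℝ, and let n ≥ 1. Define MIM(X;ω) = ∑ j, p j * exp (ω * (1 - p j)) and MIM_N(i;ω) = p i * exp (ω * (1 - p i)) / MIM(X;ω). For sequences x : Fin n → Fin N set q(x) = ∏ k, MIM_N(x k; ω). Then there exists a length assignment l : (Fin n → Fin N) → ℕ satisfying Kraft's inequality ∑_x (D : ℝ)^(-(l x : ℝ)) ≤ 1 such that (1/n) * ∑_x q(x) * (l x : ℝ) < H_MIM(X;ω) + 1/n, where H_MIM(X;ω) = -∑ i, MIM_N(i;ω) * log_D (MIM_N(i;ω)). -/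

import Mathlib

/-!
The normalized importances `q i` form a probability distribution, so the product weights
`Q x = ∏ k, q (x k)` form one on sequences of length `n`. Shannon's code for `Q`, with lengths
`⌈-log_D Q x⌉`, satisfies Kraft's inequality and has expected length below the entropy of `Q` plus
one. Since `-log_D Q x` is additive along the sequence, the entropy of `Q` is `n` times the MIM
entropy; dividing by `n` gives the bound.
-/

open Finset

section ShannonCode

variable {α : Type*} [Fintype α]

noncomputable def shannonLength (D : ℝ) (Q : α → ℝ) (x : α) : ℕ := ⌈-Real.logb D (Q x)⌉₊

theorem sum_rpow_neg_shannonLength_le_one {D : ℝ} (hD : 1 < D) {Q : α → ℝ}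
    (hQ_pos : ∀ x, 0 < Q x) (hQ_sum : ∑ x, Q x = 1) :
    ∑ x, D ^ (-(shannonLength D Q x : ℝ)) ≤ 1 := by
  calc ∑ x, D ^ (-(shannonLength D Q x : ℝ))
      ≤ ∑ x, D ^ Real.logb D (Q x) := by
        gcongr with x
        · exact hD.le
        · exact neg_le.mp (Nat.le_ceil _)
    _ = 1 := by
        rw [← hQ_sum]
        exact sum_congr rfl fun x _ => Real.rpow_logb (by linarith) hD.ne' (hQ_pos x)

theorem sum_mul_shannonLength_lt {D : ℝ} (hD : 1 < D) {Q : α → ℝ}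
    (hQ_pos : ∀ x, 0 < Q x) (hQ_sum : ∑ x, Q x = 1) :
    ∑ x, Q x * (shannonLength D Q x : ℝ) < -∑ x, Q x * Real.logb D (Q x) + 1 := by
  have hQ_le_one (x : α) : Q x ≤ 1 :=
    hQ_sum ▸ single_le_sum (fun y _ => (hQ_pos y).le) (mem_univ x)
  have hne : (univ : Finset α).Nonempty := by
    by_contra h
    simp [not_nonempty_iff_eq_empty.mp h] at hQ_sum
  calc ∑ x, Q x * (shannonLength D Q x : ℝ)
      < ∑ x, Q x * (-Real.logb D (Q x) + 1) := by
        refine sum_lt_sum_of_nonempty hne fun x _ => mul_lt_mul_of_pos_left ?_ (hQ_pos x)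
        exact Nat.ceil_lt_add_one (neg_nonneg.mpr (Real.logb_nonpos hD (hQ_pos x).le (hQ_le_one x)))
    _ = -∑ x, Q x * Real.logb D (Q x) + 1 := by
        simp only [mul_add, mul_neg, mul_one, sum_add_distrib, sum_neg_distrib, hQ_sum]

end ShannonCode

section ProductDistribution

variable {ι β : Type*} [Fintype ι] [DecidableEq ι] [Fintype β] {q : β → ℝ}

theorem sum_pi_prod_eq_one (hq : ∑ i, q i = 1) : ∑ x : ι → β, ∏ j, q (x j) = 1 := by
  rw [← Fintype.prod_sum (fun _ i => q i), hq, prod_const_one]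

theorem sum_pi_prod_mul_apply (hq : ∑ i, q i = 1) (f : β → ℝ) (k : ι) :
    ∑ x : ι → β, (∏ j, q (x j)) * f (x k) = ∑ i, q i * f i := by
  -- Put the factor `f (x k)` into the `k`-th coordinate so that the sum factorizes.
  let g : ι → β → ℝ := fun j i => q i * if j = k then f i else 1
  have hg (x : ι → β) : ∏ j, g j (x j) = (∏ j, q (x j)) * f (x k) := by
    simp only [g, prod_mul_distrib, prod_ite_eq', mem_univ, if_true]
  have hg_sum (j : ι) : ∑ i, g j i = if j = k then ∑ i, q i * f i else 1 := by
    split_ifs with h <;> simp [g, h, hq]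
  simp only [← hg, ← Fintype.prod_sum, hg_sum, prod_ite_eq', mem_univ, if_true]

theorem sum_pi_prod_mul_sum_apply (hq : ∑ i, q i = 1) (f : β → ℝ) :
    ∑ x : ι → β, (∏ j, q (x j)) * ∑ k, f (x k) = Fintype.card ι * ∑ i, q i * f i := by
  simp only [mul_sum]
  rw [sum_comm]
  simp [sum_pi_prod_mul_apply hq, mul_sum]

theorem entropy_pi {D : ℝ} (hq_pos : ∀ i, 0 < q i) (hq_sum : ∑ i, q i = 1) :
    -∑ x : ι → β, (∏ j, q (x j)) * Real.logb D (∏ j, q (x j)) =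
      Fintype.card ι * -∑ i, q i * Real.logb D (q i) := by
  have hlog (x : ι → β) : Real.logb D (∏ j, q (x j)) = ∑ j, Real.logb D (q (x j)) :=
    Real.logb_prod _ _ fun j _ => (hq_pos (x j)).ne'
  simp only [hlog]
  rw [sum_pi_prod_mul_sum_apply hq_sum (fun i => Real.logb D (q i)), mul_neg]

end ProductDistribution

theorem div_sum_pos_of_pos {β : Type*} [Fintype β] [Nonempty β] {w : β → ℝ}
    (hw : ∀ i, 0 < w i) (i : β) : 0 < w i / ∑ j, w j :=
  div_pos (hw i) (sum_pos (fun j _ => hw j) univ_nonempty)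

theorem sum_div_sum_eq_one {β : Type*} [Fintype β] [Nonempty β] {w : β → ℝ}
    (hw : ∀ i, 0 < w i) : ∑ i, w i / ∑ j, w j = 1 := by
  rw [← sum_div, div_self (sum_pos (fun j _ => hw j) univ_nonempty).ne']

/-- Corollary 2, upper bound: MIM-weighted coding theorem for i.i.d. sequence sources. -/
theorem mim_coding_sequence_upper
    (N D n : ℕ) (hD : 2 ≤ D) (hn : 1 ≤ n)
    (p : Fin N → ℝ)
    (hp : ∀ i, 0 < p i) (hpsum : ∑ i, p i = 1)
    (ω : ℝ) :
    ∃ l : (Fin n → Fin N) → ℕ,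
      (∑ x : Fin n → Fin N, (D : ℝ) ^ (-(l x : ℝ)) ≤ 1) ∧
      (1 / (n : ℝ)) *
          ∑ x : Fin n → Fin N,
            (∏ k, p (x k) * Real.exp (ω * (1 - p (x k))) /
                ∑ j, p j * Real.exp (ω * (1 - p j))) * (l x : ℝ) <
        (-∑ i, (p i * Real.exp (ω * (1 - p i)) /
              ∑ j, p j * Real.exp (ω * (1 - p j))) *
            (Real.log (p i * Real.exp (ω * (1 - p i)) /
                ∑ j, p j * Real.exp (ω * (1 - p j))) / Real.log D)) +
        1 / (n : ℝ) := by
  have : Nonempty (Fin N) := by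
    by_contra h
    simp [not_nonempty_iff.mp h] at hpsum
  have hD1 : (1 : ℝ) < D := by exact_mod_cast hD
  have hn0 : (0 : ℝ) < n := by exact_mod_cast hn
  have hw (i : Fin N) : 0 < p i * Real.exp (ω * (1 - p i)) := mul_pos (hp i) (Real.exp_pos _)
  let q : Fin N → ℝ := fun i => p i * Real.exp (ω * (1 - p i)) / ∑ j, p j * Real.exp (ω * (1 - p j))
  let H := -∑ i, q i * Real.logb D (q i)
  let Q : (Fin n → Fin N) → ℝ := fun x => ∏ k, q (x k)
  have hq_pos : ∀ i, 0 < q i := div_sum_pos_of_pos hw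
  have hq_sum : ∑ i, q i = 1 := sum_div_sum_eq_one hw
  have hQ_pos (x : Fin n → Fin N) : 0 < Q x := prod_pos fun k _ => hq_pos (x k)
  have hQ_sum : ∑ x, Q x = 1 := sum_pi_prod_eq_one hq_sum
  refine ⟨shannonLength D Q, sum_rpow_neg_shannonLength_le_one hD1 hQ_pos hQ_sum, ?_⟩
  have hlen : ∑ x, Q x * (shannonLength D Q x : ℝ) < n * H + 1 := by
    have h := sum_mul_shannonLength_lt hD1 hQ_pos hQ_sum
    rwa [entropy_pi hq_pos hq_sum, Fintype.card_fin] at h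
  calc 1 / (n : ℝ) * ∑ x, Q x * (shannonLength D Q x : ℝ)
      < 1 / n * (n * H + 1) := by gcongr
    _ = H + 1 / n := by field_simp
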